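/- Let v > 3√2/4, a > 0, b > 0. Then the equation (sin²x·(v − sin x))/(cos²x·(v − cos x)) = b/a has exactly one solution x in (0, π/2). -/

import Mathlib

/-!
Write `s = sin x`, `c = cos x`. Differentiating, `G' = s c H / (c² (v - c))²` with
`H = 2 (v - s)(v - c) + s c (1 - v (s + c))`, so `G` is strictly increasing as soon as `H > 0`.
Using `s² + c² = 1`, `2H` is a cubic in `u = s + c ∈ (1, √2]`, and
`2H = (4v - 3√2)(v - √2/2) + (√2 - u)(v (u² + √2 u + 5) - 3u - 3√2)`,
where the second term is nonnegative and the first is positive for `v > 3√2/4`.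
Existence follows from the intermediate value theorem applied to `s² (v - s) - k c² (v - c)`,
which changes sign on `[0, π/2]` once `v > 1`.
-/

open Real Set

noncomputable def G (v x : ℝ) : ℝ := sin x ^ 2 * (v - sin x) / (cos x ^ 2 * (v - cos x))

def H (v s c : ℝ) : ℝ := 2 * (v - s) * (v - c) + s * c * (1 - v * (s + c))

lemma one_lt_of_three_mul_sqrt_two_div_four_lt {v : ℝ} (hv : 3 * √2 / 4 < v) : 1 < v := by
  nlinarith [sq_sqrt (show (0 : ℝ) ≤ 2 by norm_num), sqrt_nonneg 2]

lemma H_pos {v s c : ℝ} (hv : 3 * √2 / 4 < v) (hs : 0 < s) (hc : 0 < c)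
    (hsc : s ^ 2 + c ^ 2 = 1) : 0 < H v s c := by
  set r := √2
  have hr2 : r ^ 2 = 2 := sq_sqrt (by norm_num)
  have hr : 0 < r := sqrt_pos.mpr (by norm_num)
  have hv1 : 1 < v := one_lt_of_three_mul_sqrt_two_div_four_lt hv
  have hu_le : s + c ≤ r := by nlinarith [sq_nonneg (s - c)]
  have hu_gt : 1 < s + c := by nlinarith [mul_pos hs hc]
  have hcubic : 0 ≤ v * ((s + c) ^ 2 + r * (s + c) + 5) - 3 * (s + c) - 3 * r := by
    nlinarith [mul_pos (sub_pos.mpr hu_gt) (show 0 < s + c + r - 2 by nlinarith)]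
  have hsplit : 2 * H v s c = (4 * v - 3 * r) * (v - r / 2)
      + (r - (s + c)) * (v * ((s + c) ^ 2 + r * (s + c) + 5) - 3 * (s + c) - 3 * r) := by
    unfold H
    linear_combination (v * (s + c) - 3) * hsc + (3 / 2 - v * (s + c)) * hr2
  linarith [mul_pos (show 0 < 4 * v - 3 * r by linarith) (show 0 < v - r / 2 by nlinarith),
    mul_nonneg (sub_nonneg.mpr hu_le) hcubic]

lemma HasDerivAt.sq_mul_const_sub {f : ℝ → ℝ} {f' x : ℝ} (v : ℝ) (hf : HasDerivAt f f' x) :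
    HasDerivAt (fun y => f y ^ 2 * (v - f y)) (f x * (2 * v - 3 * f x) * f') x := by
  refine ((hf.fun_pow 2).fun_mul (hf.const_sub v)).congr_deriv ?_
  push_cast
  ring

lemma hasDerivAt_G {v x : ℝ} (hx : cos x ^ 2 * (v - cos x) ≠ 0) :
    HasDerivAt (G v)
      (sin x * cos x * H v (sin x) (cos x) / (cos x ^ 2 * (v - cos x)) ^ 2) x := by
  refine (((hasDerivAt_sin x).sq_mul_const_sub v).fun_div
    ((hasDerivAt_cos x).sq_mul_const_sub v) hx).congr_deriv ?_
  congr 1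
  unfold H
  linear_combination sin x * cos x * (2 * v ^ 2 - 2 * v * (sin x + cos x)
    + 3 * sin x * cos x) * sin_sq_add_cos_sq x

lemma cos_sq_mul_sub_pos {v x : ℝ} (hv : 1 < v) (hx : x ∈ Ioo 0 (π / 2)) :
    0 < cos x ^ 2 * (v - cos x) := by
  have := cos_pos_of_mem_Ioo ⟨by linarith [hx.1, pi_pos], hx.2⟩
  have := cos_le_one x
  exact mul_pos (by positivity) (by linarith)

lemma strictMonoOn_G {v : ℝ} (hv : 3 * √2 / 4 < v) : StrictMonoOn (G v) (Ioo 0 (π / 2)) := by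
  have hv1 := one_lt_of_three_mul_sqrt_two_div_four_lt hv
  have hderiv (x) (hx : x ∈ Ioo 0 (π / 2)) :=
    hasDerivAt_G (cos_sq_mul_sub_pos hv1 hx).ne'
  refine strictMonoOn_of_deriv_pos (convex_Ioo _ _)
    (fun x hx => (hderiv x hx).continuousAt.continuousWithinAt) fun x hx => ?_
  rw [interior_Ioo] at hx
  have hs : 0 < sin x := sin_pos_of_pos_of_lt_pi hx.1 (by linarith [hx.2, pi_pos])
  have hc : 0 < cos x := cos_pos_of_mem_Ioo ⟨by linarith [hx.1, pi_pos], hx.2⟩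
  rw [(hderiv x hx).deriv]
  exact div_pos (mul_pos (mul_pos hs hc) (H_pos hv hs hc (sin_sq_add_cos_sq x)))
    (pow_pos (cos_sq_mul_sub_pos hv1 hx) 2)

lemma exists_G_eq {v k : ℝ} (hv : 1 < v) (hk : 0 < k) : ∃ x ∈ Ioo 0 (π / 2), G v x = k := by
  set F : ℝ → ℝ := fun x => sin x ^ 2 * (v - sin x) - k * (cos x ^ 2 * (v - cos x))
  have hF : ContinuousOn F (Icc 0 (π / 2)) := by fun_prop
  have hsign : (0 : ℝ) ∈ Ioo (F 0) (F (π / 2)) := by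
    simp only [F, sin_zero, cos_zero, sin_pi_div_two, cos_pi_div_two]
    constructor <;> nlinarith
  obtain ⟨x, hx, hFx⟩ := intermediate_value_Ioo (by positivity) hF hsign
  refine ⟨x, hx, ?_⟩
  rw [G, div_eq_iff (cos_sq_mul_sub_pos hv hx).ne']
  linarith [show F x = 0 from hFx]

theorem G_eq_unique_solution (v a b : ℝ) (hv : 3 * Real.sqrt 2 / 4 < v)
    (ha : 0 < a) (hb : 0 < b) :
    ∃! x : ℝ, x ∈ Set.Ioo 0 (π/2) ∧
      (sin x)^2 * (v - sin x) / ((cos x)^2 * (v - cos x)) = b / a := by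
  obtain ⟨x, hx, hGx⟩ :=
    exists_G_eq (one_lt_of_three_mul_sqrt_two_div_four_lt hv) (div_pos hb ha)
  exact ⟨x, ⟨hx, hGx⟩, fun y ⟨hy, hGy⟩ => (strictMonoOn_G hv).injOn hy hx (hGy.trans hGx.symm)⟩
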